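/- C_V is an F_q-linear subcode of C if and only if V_j is an F_q-linear subspace of F_{q^n} for every j = 1,…,s. -/

import Mathlib

open scoped BigOperators

namespace QCSub

/-- The cyclic shift `T(u_1,…,u_N) = (u_N, u_1, …, u_{N-1})` on words of length `N`. -/
def shift {F : Type*} {N : ℕ} (u : Fin N → F) : Fin N → F :=
  fun k => u ⟨((k : ℕ) + (N - 1)) % N, Nat.mod_lt _ k.pos⟩

/-- A code `C ⊆ F^N` is quasi-cyclic of index `ℓ` if `T^ℓ(C) = C` and `ℓ` is the
smallest positive integer with this property. -/
def IsQCOfIndex {F : Type*} {N : ℕ} (C : Set (Fin N → F)) (ℓ : ℕ) : Prop :=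
  0 < ℓ ∧ shift^[ℓ] '' C = C ∧ ∀ m : ℕ, 0 < m → shift^[m] '' C = C → ℓ ≤ m

/-- The `q`-cyclotomic coset of `i` mod `N`, i.e. `{i·q^k mod N : k ≥ 0}`. -/
def cycCoset (q N i : ℕ) : Set (ZMod N) :=
  {x | ∃ k : ℕ, x = (i : ZMod N) * (q : ZMod N) ^ k}

/-- The word `(Tr_{E/F}(β_1 α^{k i_1} + ⋯ + β_s α^{k i_s}))_{0 ≤ k ≤ N−1}`. -/
noncomputable def traceWord (F : Type*) {E : Type*} [Field F] [Field E] [Algebra F E]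
    (N : ℕ) {s : ℕ} (α : E) (i : Fin s → ℕ) (β : Fin s → E) : Fin N → F :=
  fun k => Algebra.trace F E (∑ j, β j * α ^ ((k : ℕ) * i j))

/-- The (sub)code `C_V` determined by coefficient sets `V_1,…,V_s ⊆ E`. -/
noncomputable def codeOf (F : Type*) {E : Type*} [Field F] [Field E] [Algebra F E]
    (N : ℕ) {s : ℕ} (α : E) (i : Fin s → ℕ) (V : Fin s → Set E) : Set (Fin N → F) :=
  {w | ∃ β : Fin s → E, (∀ j, β j ∈ V j) ∧ w = traceWord F N α i β}

/-- An `F`-subspace `V ⊆ E` "is a vector space over" the intermediate field `K`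
if it is closed under multiplication by the elements of `K`. -/
def SpanOver {F E : Type*} [Field F] [Field E] [Algebra F E]
    (V : Submodule F E) (K : IntermediateField F E) : Prop :=
  ∀ c ∈ K, ∀ v ∈ V, c * v ∈ V

/-- The Gaussian binomial coefficient `(m choose k)_Q`. -/
def gaussBinom (Q m k : ℕ) : ℕ :=
  (∏ t ∈ Finset.range k, (Q ^ m - Q ^ t)) / (∏ t ∈ Finset.range k, (Q ^ k - Q ^ t))

/-- `N(m, Q)`: the number of nonzero `F_Q`-subspaces of an `m`-dimensional
`F_Q`-vector space, i.e. the sum of Gaussian binomial coefficients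
`Σ_{k=1}^{m} (m choose k)_Q`. -/
def numSubspaces (m Q : ℕ) : ℕ := ∑ k ∈ Finset.Icc 1 m, gaussBinom Q m k

end QCSub

open QCSub

/-!
The map `β ↦ (Tr(∑ⱼ βⱼ α^{k iⱼ}))ₖ` is `F_q`-linear and `C_V` is the image of `V_1 × ⋯ × V_s`
under it. An injective linear map sends a set onto a subspace iff the set is a subspace, and a
product of sets is a subspace iff each factor is, so everything rests on injectivity.

Writing the trace as `∑_{t<n} (·)^{q^t}`, a vanishing word gives
`∑_{j,t} βⱼ^{q^t} (α^{iⱼ q^t})^k = 0` for every `k`. Since the cosets of the `iⱼ` are distinct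
and of full size `n`, the exponents `iⱼ q^t` are pairwise distinct mod `N = ord α`, so the
`α^{iⱼ q^t}` are distinct and Dedekind's independence of the characters `k ↦ z^k` of `ℕ` forces
every coefficient, in particular `βⱼ`, to vanish.
-/

open Finset Function

theorem eq_zero_of_forall_sum_mul_pow_eq_zero {ι L : Type*} [Fintype ι] [CommRing L] [IsDomain L]
    {z : ι → L} (hz : Injective z) {c : ι → L} (h : ∀ k : ℕ, ∑ x, c x * z x ^ k = 0) :
    c = 0 := by
  have hli := (linearIndependent_monoidHom (Multiplicative ℕ) L).comp _
    ((powersHom L).injective.comp hz)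
  refine funext (Fintype.linearIndependent_iff.mp hli c (funext fun k => ?_))
  simpa [Finset.sum_apply] using h k.toAdd

theorem IsOfFinOrder.pow_injective_of_natCast_injective {ι G : Type*} [Monoid G] {x : G}
    (hx : IsOfFinOrder x) {e : ι → ℕ} (he : Injective fun k => (e k : ZMod (orderOf x))) :
    Injective fun k => x ^ e k := fun _ _ hab =>
  he ((ZMod.natCast_eq_natCast_iff _ _ _).mpr (hx.pow_eq_pow_iff_modEq.mp hab))

theorem algebraMap_trace_sum_mul_pow {F E ι : Type*} [Field F] [Field E] [Algebra F E] [Finite E]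
    [Fintype ι] (β : ι → E) (e : ι → ℕ) (x : E) :
    algebraMap F E (Algebra.trace F E (∑ j, β j * x ^ e j)) =
      ∑ t ∈ range (Module.finrank F E), ∑ j, β j ^ Nat.card F ^ t * x ^ (e j * Nat.card F ^ t) := by
  have := Finite.of_injective _ (FaithfulSMul.algebraMap_injective F E)
  have := Fintype.ofFinite F
  rw [FiniteField.algebraMap_trace_eq_sum_pow]
  refine sum_congr rfl fun t _ => ?_
  have hfrob (y : E) : (FiniteField.frobeniusAlgHom F E ^ t) y = y ^ Nat.card F ^ t := by
    rw [AlgHom.coe_pow, FiniteField.coe_frobeniusAlgHom, pow_iterate, Fintype.card_eq_nat_card]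
  simp only [← hfrob, map_sum, map_mul, map_pow]
  simp only [hfrob, ← pow_mul, mul_comm]

section Submodule

variable {R M P : Type*} [Semiring R] [AddCommMonoid M] [Module R M] [AddCommMonoid P] [Module R P]

theorem exists_submodule_eq_image_iff {f : M →ₗ[R] P} (hf : Injective f) (s : Set M) :
    (∃ S : Submodule R P, f '' s = S) ↔ ∃ T : Submodule R M, s = T := by
  constructor
  · rintro ⟨S, hS⟩
    exact ⟨S.comap f, by rw [Submodule.comap_coe, ← hS, Set.preimage_image_eq _ hf]⟩
  · rintro ⟨T, rfl⟩
    exact ⟨T.map f, (Submodule.map_coe f T).symm⟩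

theorem exists_submodule_eq_univ_pi_iff {ι : Type*} [DecidableEq ι] {φ : ι → Type*}
    [∀ i, AddCommMonoid (φ i)] [∀ i, Module R (φ i)] (V : ∀ i, Set (φ i)) :
    (∃ S : Submodule R (∀ i, φ i), Set.univ.pi V = S) ↔ ∀ i, ∃ W : Submodule R (φ i), V i = W := by
  constructor
  · rintro ⟨S, hS⟩ i
    have hzero : (0 : ∀ i, φ i) ∈ Set.univ.pi V := hS ▸ S.zero_mem
    refine ⟨S.comap (LinearMap.single R φ i), Set.ext fun x => ?_⟩
    rw [SetLike.mem_coe, Submodule.mem_comap, ← SetLike.mem_coe, ← hS, LinearMap.coe_single]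
    exact ((Set.update_mem_pi_iff_of_mem hzero).trans (imp_iff_right (Set.mem_univ i))).symm
  · intro hV
    choose W hW using hV
    exact ⟨Submodule.pi Set.univ W, by ext; simp [hW]⟩

end Submodule

namespace QCSub

section CyclotomicCoset

variable {q N n : ℕ}

theorem cycCoset_subset_of_mem {a b : ℕ} (h : (a : ZMod N) ∈ cycCoset q N b) :
    cycCoset q N a ⊆ cycCoset q N b := by
  obtain ⟨l, hl⟩ := h
  rintro _ ⟨k, rfl⟩
  exact ⟨l + k, by rw [hl, pow_add, mul_assoc]⟩

theorem natCast_mem_cycCoset_of_mul_pow_eq (hq : (q : ZMod N) ^ n = 1) (hn : 0 < n)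
    {a b t t' : ℕ} (h : (a : ZMod N) * q ^ t = b * q ^ t') : (a : ZMod N) ∈ cycCoset q N b := by
  refine ⟨t' + (n - 1) * t, ?_⟩
  calc (a : ZMod N) = a * (q ^ n) ^ t := by rw [hq, one_pow, mul_one]
    _ = a * q ^ t * q ^ ((n - 1) * t) := by
      rw [mul_assoc, ← pow_add, ← pow_mul, add_comm, ← Nat.add_one_mul, Nat.sub_add_cancel hn]
    _ = b * q ^ (t' + (n - 1) * t) := by rw [h, mul_assoc, ← pow_add]

theorem cycCoset_eq_of_mul_pow_eq (hq : (q : ZMod N) ^ n = 1) (hn : 0 < n) {a b t t' : ℕ}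
    (h : (a : ZMod N) * q ^ t = b * q ^ t') : cycCoset q N a = cycCoset q N b :=
  (cycCoset_subset_of_mem (natCast_mem_cycCoset_of_mul_pow_eq hq hn h)).antisymm
    (cycCoset_subset_of_mem (natCast_mem_cycCoset_of_mul_pow_eq hq hn h.symm))

theorem cycCoset_eq_range (hq : (q : ZMod N) ^ n = 1) (hn : 0 < n) (a : ℕ) :
    cycCoset q N a = Set.range fun t : Fin n => (a : ZMod N) * q ^ (t : ℕ) := by
  ext x
  constructor
  · rintro ⟨k, rfl⟩
    exact ⟨⟨k % n, Nat.mod_lt k hn⟩, by rw [pow_eq_pow_mod k hq]⟩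
  · rintro ⟨t, rfl⟩
    exact ⟨t, rfl⟩

theorem injective_mul_pow_of_ncard_cycCoset (hq : (q : ZMod N) ^ n = 1) (hn : 0 < n) {a : ℕ}
    (ha : (cycCoset q N a).ncard = n) : Injective fun t : Fin n => (a : ZMod N) * q ^ (t : ℕ) := by
  rw [cycCoset_eq_range hq hn, ← Set.image_univ] at ha
  refine Set.injOn_univ.mp ((Set.ncard_image_iff (Set.toFinite _)).mp ?_)
  rw [ha, Set.ncard_univ, Nat.card_fin]

theorem injective_mul_pow_of_cycCoset {ι : Type*} (hq : (q : ZMod N) ^ n = 1) (hn : 0 < n)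
    {i : ι → ℕ} (hdist : ∀ j j', j ≠ j' → cycCoset q N (i j) ≠ cycCoset q N (i j'))
    (hfull : ∀ j, (cycCoset q N (i j)).ncard = n) :
    Injective fun jt : ι × Fin n => (i jt.1 : ZMod N) * q ^ (jt.2 : ℕ) := by
  rintro ⟨j, t⟩ ⟨j', t'⟩ h
  obtain rfl : j = j' := by_contra fun hne => hdist j j' hne (cycCoset_eq_of_mul_pow_eq hq hn h)
  exact Prod.ext rfl (injective_mul_pow_of_ncard_cycCoset hq hn (hfull j) h)

end CyclotomicCoset

section TraceWord

variable (F : Type*) {E : Type*} [Field F] [Field E] [Algebra F E] (N : ℕ) {s : ℕ} (α : E)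
  (i : Fin s → ℕ)

noncomputable def traceWordLinearMap : (Fin s → E) →ₗ[F] (Fin N → F) where
  toFun := traceWord F N α i
  map_add' β γ := funext fun k => by
    simp only [traceWord, Pi.add_apply, add_mul, sum_add_distrib, map_add]
  map_smul' c β := funext fun k => by
    simp only [traceWord, Pi.smul_apply, smul_mul_assoc, ← smul_sum, map_smul, RingHom.id_apply]

theorem codeOf_eq_image_traceWordLinearMap (V : Fin s → Set E) :
    codeOf F N α i V = traceWordLinearMap F N α i '' Set.univ.pi V := by
  ext w
  simp [codeOf, traceWordLinearMap, eq_comm]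

variable {F N α i}

theorem traceWordLinearMap_injective [Finite E] (hα : orderOf α = N) (hN : 0 < N)
    (hexp : Injective fun jt : Fin s × Fin (Module.finrank F E) =>
      α ^ (i jt.1 * Nat.card F ^ (jt.2 : ℕ))) :
    Injective (traceWordLinearMap F N α i) := by
  rw [← LinearMap.ker_eq_bot, LinearMap.ker_eq_bot']
  intro β hβ
  have hpow : ∀ k : ℕ, ∑ jt : Fin s × Fin (Module.finrank F E),
      β jt.1 ^ Nat.card F ^ (jt.2 : ℕ) * (α ^ (i jt.1 * Nat.card F ^ (jt.2 : ℕ))) ^ k = 0 := by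
    intro k
    -- `α ^ (k % N) = α ^ k`, so coordinate `k % N` of the word gives the identity for every `k`
    have htr := congr_arg (algebraMap F E) (congr_fun hβ ⟨k % N, Nat.mod_lt k hN⟩)
    simp only [traceWordLinearMap, LinearMap.coe_mk, AddHom.coe_mk, traceWord, Pi.zero_apply,
      map_zero, pow_mul, ← hα, pow_mod_orderOf, algebraMap_trace_sum_mul_pow] at htr
    rw [Fintype.sum_prod_type, sum_comm, ← htr, ← Fin.sum_univ_eq_sum_range]
    refine sum_congr rfl fun t _ => sum_congr rfl fun j _ => ?_
    ring
  have hcoeff := congr_fun (eq_zero_of_forall_sum_mul_pow_eq_zero hexp hpow)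
  funext j
  simpa using hcoeff (j, ⟨0, Module.finrank_pos⟩)

end TraceWord

end QCSub

theorem codeOf_linear_iff_subspaces_general
    (p e q n N : ℕ) [Fact p.Prime] (hq : q = p ^ e)
    (hN : N = q ^ n - 1)
    (F E : Type*) [Field F] [Field E] [Algebra F E]
    (hF : Nat.card F = q) (hE : Nat.card E = q ^ n)
    (α : E) (hα : orderOf α = q ^ n - 1)
    (s : ℕ) (i : Fin s → ℕ)
    (hdist : ∀ j j' : Fin s, j ≠ j' → cycCoset q N (i j) ≠ cycCoset q N (i j'))
    (hfull : ∀ j, (cycCoset q N (i j)).ncard = n)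
    (V : Fin s → Set E) :
    (∃ S : Submodule F (Fin N → F), codeOf F N α i V = (S : Set (Fin N → F))) ↔
      (∀ j, ∃ W : Submodule F E, V j = (W : Set E)) := by
  -- `Nat.card` is `0` on infinite types: `q ≠ 0` is what makes `F` and `E` finite
  have hq0 : q ≠ 0 := hq ▸ pow_ne_zero e (Fact.out : p.Prime).ne_zero
  have : Finite F := Nat.finite_of_card_ne_zero (hF ▸ hq0)
  have : Finite E := Nat.finite_of_card_ne_zero (hE ▸ pow_ne_zero n hq0)
  have hcard : Nat.card E = q ^ Module.finrank F E := hF ▸ Module.natCard_eq_pow_finrank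
  obtain rfl : n = Module.finrank F E :=
    Nat.pow_right_injective (hF ▸ Finite.one_lt_card) (hE.symm.trans hcard)
  obtain rfl : orderOf α = N := hα.trans hN.symm
  have hN0 : 0 < orderOf α := by
    rw [hα, ← hcard]
    exact Nat.sub_pos_of_lt Finite.one_lt_card
  have hqN : (q : ZMod (orderOf α)) ^ Module.finrank F E = 1 := by
    rw [← Nat.cast_pow, show q ^ Module.finrank F E = orderOf α + 1 by omega]
    simp
  have hexp := (orderOf_pos_iff.mp hN0).pow_injective_of_natCast_injective
    (e := fun jt : Fin s × Fin (Module.finrank F E) => i jt.1 * q ^ (jt.2 : ℕ))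
    (by simpa using injective_mul_pow_of_cycCoset hqN Module.finrank_pos hdist hfull)
  rw [codeOf_eq_image_traceWordLinearMap, exists_submodule_eq_image_iff
    (traceWordLinearMap_injective rfl hN0 (hF ▸ hexp)), exists_submodule_eq_univ_pi_iff]

/-- `C_V` is an `F_q`-linear subcode of the cyclic code `C` iff every
`V_j` is an `F_q`-linear subspace of `F_{q^n}`. -/
theorem codeOf_linear_iff_subspaces
    (p e q n N : ℕ) [Fact p.Prime] (he : 0 < e) (hq : q = p ^ e) (hn : 0 < n)
    (hN : N = q ^ n - 1)
    (F E : Type*) [Field F] [Field E] [Algebra F E]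
    (hF : Nat.card F = q) (hE : Nat.card E = q ^ n)
    (α : E) (hα : orderOf α = q ^ n - 1)
    (s : ℕ) (i : Fin s → ℕ) (hi : ∀ j, 1 ≤ i j)
    (hdist : ∀ j j' : Fin s, j ≠ j' → cycCoset q N (i j) ≠ cycCoset q N (i j'))
    (hfull : ∀ j, (cycCoset q N (i j)).ncard = n)
    (V : Fin s → Set E) :
    (∃ S : Submodule F (Fin N → F), codeOf F N α i V = (S : Set (Fin N → F))) ↔
      (∀ j, ∃ W : Submodule F E, V j = (W : Set E)) :=
  codeOf_linear_iff_subspaces_general p e q n N hq hN F E hF hE α hα s i hdist hfull V
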